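/- For n orthonormal bases {ψ^1}, ..., {ψ^n} of ℂ^d (d ≥ 2, n ≥ 2), the normalized measure Q̄ = (1/C(n,2)) ∑_{{a,b}} (1/(d(√d − 1))) ∑_{i,j} (|⟨ψ^a_i, ψ^b_j⟩| − 1/d) satisfies 0 ≤ Q̄ ≤ 1; Q̄ = 1 if and only if all pairs of bases are mutually unbiased, and Q̄ = 0 if and only if every pair of bases coincides up to permutation and phases. -/

import Mathlib

/-! Every row and column of the matrix `(‖⟪ψ^a_i, ψ^b_j⟫‖)_{ij}` is a unit vector with nonnegative
entries. Such a vector `x ∈ ℝ^d` has `1 ≤ ∑ x_j`, since `x_j ^ 2 ≤ x_j`, with equality iff it is a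
standard basis vector; and `∑ x_j ≤ √d`, with equality iff all `x_j = 1/√d`, since
`∑ (x_j - 1/√d) ^ 2 = 2 - (2/√d) ∑ x_j`. Summing over rows, the total `S_{ab}` of the matrix
satisfies `d ≤ S_{ab} ≤ d√d`, so each pair term `Q_{ab} = (S_{ab} - d) / (d(√d - 1))` lies in
`[0, 1]`, and their average `Q̄` equals `1` (resp. `0`) iff every term does. In the lower equality
case, choosing in each row an entry equal to `1` gives a permutation, because the columns are unit
vectors too. -/

open Finset
open scoped BigOperators

section SumSqEqOne

variable {ι : Type*} [Fintype ι] {x : ι → ℝ}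

lemma le_one_of_sum_sq_eq_one (hx : ∑ j, x j ^ 2 = 1) (j : ι) : x j ≤ 1 := by
  have : x j ^ 2 ≤ 1 := hx ▸ single_le_sum (fun k _ => sq_nonneg (x k)) (mem_univ j)
  nlinarith

lemma one_le_sum_of_sum_sq_eq_one (hx : ∑ j, x j ^ 2 = 1) (h0 : ∀ j, 0 ≤ x j) :
    1 ≤ ∑ j, x j :=
  hx ▸ sum_le_sum fun j _ => by nlinarith [h0 j, le_one_of_sum_sq_eq_one hx j]

lemma eq_zero_of_sum_sq_eq_one_of_eq_one (hx : ∑ j, x j ^ 2 = 1) {j k : ι} (hj : x j = 1)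
    (hk : k ≠ j) : x k = 0 := by
  classical
  have : ∑ i ∈ {j, k}, x i ^ 2 ≤ ∑ i, x i ^ 2 :=
    sum_le_sum_of_subset_of_nonneg (subset_univ _) fun i _ _ => sq_nonneg (x i)
  rw [sum_pair hk.symm, hx, hj] at this
  nlinarith [sq_nonneg (x k)]

lemma sum_eq_one_iff_exists_eq_one (hx : ∑ j, x j ^ 2 = 1) (h0 : ∀ j, 0 ≤ x j) :
    ∑ j, x j = 1 ↔ ∃ j, x j = 1 := by
  constructor
  · intro hsum
    have hidem : ∀ j, x j ^ 2 = x j := by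
      have hgap : ∑ j, (x j - x j ^ 2) = 0 := by rw [sum_sub_distrib, hsum, hx, sub_self]
      intro j
      have := (sum_eq_zero_iff_of_nonneg fun k _ => by
        nlinarith [h0 k, le_one_of_sum_sq_eq_one hx k]).mp hgap j (mem_univ j)
      linarith
    obtain ⟨j, -, hj⟩ := exists_ne_zero_of_sum_ne_zero (hsum ▸ one_ne_zero)
    refine ⟨j, ?_⟩
    have := hidem j
    have : x j * (x j - 1) = 0 := by linarith
    exact sub_eq_zero.mp ((mul_eq_zero.mp this).resolve_left hj)
  · rintro ⟨j, hj⟩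
    rw [sum_eq_single j (fun k _ hk => eq_zero_of_sum_sq_eq_one_of_eq_one hx hj hk) (by simp), hj]

lemma card_pos_of_sum_sq_eq_one (hx : ∑ j, x j ^ 2 = 1) : 0 < Fintype.card ι := by
  obtain ⟨j, -, -⟩ := exists_ne_zero_of_sum_ne_zero (hx ▸ one_ne_zero)
  exact Fintype.card_pos_iff.mpr ⟨j⟩

lemma sum_sq_sub_inv_sqrt_card (hx : ∑ j, x j ^ 2 = 1) :
    ∑ j, (x j - (√(Fintype.card ι))⁻¹) ^ 2 = 2 - 2 * (√(Fintype.card ι))⁻¹ * ∑ j, x j := by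
  have hd : (0 : ℝ) < Fintype.card ι := by exact_mod_cast card_pos_of_sum_sq_eq_one hx
  simp only [sub_sq, sum_add_distrib, sum_sub_distrib, hx, ← sum_mul, ← mul_sum, sum_const,
    card_univ, nsmul_eq_mul, inv_pow, Real.sq_sqrt hd.le, mul_inv_cancel₀ hd.ne']
  ring

lemma sum_le_sqrt_card_of_sum_sq_eq_one (hx : ∑ j, x j ^ 2 = 1) :
    ∑ j, x j ≤ √(Fintype.card ι) := by
  have hs : 0 < √(Fintype.card ι) := by
    simpa using card_pos_of_sum_sq_eq_one hx
  have : 0 ≤ ∑ j, (x j - (√(Fintype.card ι))⁻¹) ^ 2 := sum_nonneg fun j _ => sq_nonneg _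
  rw [sum_sq_sub_inv_sqrt_card hx] at this
  field_simp at this
  linarith

lemma sum_eq_sqrt_card_iff_of_sum_sq_eq_one (hx : ∑ j, x j ^ 2 = 1) :
    ∑ j, x j = √(Fintype.card ι) ↔ ∀ j, x j = (√(Fintype.card ι))⁻¹ := by
  have hs : 0 < √(Fintype.card ι) := by
    simpa using card_pos_of_sum_sq_eq_one hx
  calc ∑ j, x j = √(Fintype.card ι)
      ↔ ∑ j, (x j - (√(Fintype.card ι))⁻¹) ^ 2 = 0 := by
        rw [sum_sq_sub_inv_sqrt_card hx]
        constructor <;> intro h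
        · rw [h, mul_assoc, inv_mul_cancel₀ hs.ne']; norm_num
        · field_simp at h; linarith
    _ ↔ ∀ j, x j = (√(Fintype.card ι))⁻¹ := by
        simp [sum_eq_zero_iff_of_nonneg fun j _ => sq_nonneg (x j - _), sub_eq_zero]

end SumSqEqOne

lemma natCast_mul_sqrt_sub_one_nonneg (n : ℕ) : 0 ≤ (n : ℝ) * (√n - 1) := by
  rcases n.eq_zero_or_pos with rfl | hn
  · simp
  · exact mul_nonneg n.cast_nonneg (sub_nonneg.mpr (Real.one_le_sqrt.mpr (by exact_mod_cast hn)))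

lemma natCast_mul_sqrt_sub_one_pos {n : ℕ} (hn : 1 < n) : 0 < (n : ℝ) * (√n - 1) := by
  have hn : (1 : ℝ) < n := by exact_mod_cast hn
  have : 1 < √(n : ℝ) := by simpa using Real.sqrt_lt_sqrt zero_le_one hn
  exact mul_pos (by linarith) (sub_pos.mpr this)

lemma Finset.expect_eq_iff_of_le {α K : Type*} [Field K] [LinearOrder K] [IsStrictOrderedRing K]
    {s : Finset α} {f : α → K} {a : K} (hs : s.Nonempty) (hf : ∀ i ∈ s, f i ≤ a) :
    𝔼 i ∈ s, f i = a ↔ ∀ i ∈ s, f i = a := by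
  have h := expect_eq_zero_iff_of_nonneg fun i hi => sub_nonneg.mpr (hf i hi)
  rw [expect_sub_distrib, expect_const hs, sub_eq_zero] at h
  rw [eq_comm, h]
  exact forall₂_congr fun i _ => sub_eq_zero.trans eq_comm

lemma forall_mem_filter_lt_iff_forall_ne {α : Type*} [Fintype α] [LinearOrder α]
    {r : α → α → Prop} (hr : ∀ a b, r a b → r b a) :
    (∀ p ∈ univ.filter (fun p : α × α => p.1 < p.2), r p.1 p.2) ↔ ∀ a b, a ≠ b → r a b := by
  simp only [mem_filter, mem_univ, true_and, Prod.forall]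
  refine ⟨fun h a b hab => ?_, fun h a b hab => h a b hab.ne⟩
  rcases hab.lt_or_gt with hab | hab
  exacts [h a b hab, hr b a (h b a hab)]

open scoped InnerProductSpace

namespace OrthonormalBasis

variable {ι 𝕜 E : Type*} [Fintype ι] [RCLike 𝕜] [NormedAddCommGroup E] [InnerProductSpace 𝕜 E]
  (e f : OrthonormalBasis ι 𝕜 E)

lemma sum_sq_norm_inner_eq_one_left (i : ι) : ∑ j, ‖⟪e i, f j⟫_𝕜‖ ^ 2 = 1 := by
  rw [f.sum_sq_norm_inner_left, e.orthonormal.1 i, one_pow]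

lemma sum_sq_norm_inner_eq_one_right (j : ι) : ∑ i, ‖⟪e i, f j⟫_𝕜‖ ^ 2 = 1 := by
  rw [e.sum_sq_norm_inner_right, f.orthonormal.1 j, one_pow]

noncomputable def overlapSum : ℝ := ∑ i, ∑ j, ‖⟪e i, f j⟫_𝕜‖

lemma one_le_sum_norm_inner (i : ι) : 1 ≤ ∑ j, ‖⟪e i, f j⟫_𝕜‖ :=
  one_le_sum_of_sum_sq_eq_one (e.sum_sq_norm_inner_eq_one_left f i) fun _ => norm_nonneg _

lemma sum_norm_inner_le_sqrt_card (i : ι) : ∑ j, ‖⟪e i, f j⟫_𝕜‖ ≤ √(Fintype.card ι) :=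
  sum_le_sqrt_card_of_sum_sq_eq_one (e.sum_sq_norm_inner_eq_one_left f i)

lemma card_le_overlapSum : (Fintype.card ι : ℝ) ≤ e.overlapSum f :=
  calc (Fintype.card ι : ℝ) = ∑ _i : ι, (1 : ℝ) := by simp
    _ ≤ e.overlapSum f := sum_le_sum fun i _ => e.one_le_sum_norm_inner f i

lemma overlapSum_le : e.overlapSum f ≤ Fintype.card ι * √(Fintype.card ι) :=
  calc e.overlapSum f ≤ ∑ _i : ι, √(Fintype.card ι) :=
        sum_le_sum fun i _ => e.sum_norm_inner_le_sqrt_card f i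
    _ = Fintype.card ι * √(Fintype.card ι) := by simp

lemma overlapSum_eq_card_mul_sqrt_iff :
    e.overlapSum f = Fintype.card ι * √(Fintype.card ι) ↔
      ∀ i j, ‖⟪e i, f j⟫_𝕜‖ ^ 2 = 1 / Fintype.card ι := by
  calc e.overlapSum f = Fintype.card ι * √(Fintype.card ι)
      ↔ e.overlapSum f = ∑ _i : ι, √(Fintype.card ι) := by simp
    _ ↔ ∀ i ∈ univ, ∑ j, ‖⟪e i, f j⟫_𝕜‖ = √(Fintype.card ι) :=
        sum_eq_sum_iff_of_le fun i _ => e.sum_norm_inner_le_sqrt_card f i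
    _ ↔ ∀ i j, ‖⟪e i, f j⟫_𝕜‖ = (√(Fintype.card ι))⁻¹ := by
        simp only [mem_univ, true_implies,
          fun i => sum_eq_sqrt_card_iff_of_sum_sq_eq_one (e.sum_sq_norm_inner_eq_one_left f i)]
    _ ↔ ∀ i j, ‖⟪e i, f j⟫_𝕜‖ ^ 2 = 1 / Fintype.card ι := forall₂_congr fun i j => by
        rw [← sq_eq_sq₀ (norm_nonneg _) (by positivity), inv_pow,
          Real.sq_sqrt (Nat.cast_nonneg _), one_div]

lemma exists_perm_norm_inner_eq_one_iff :
    (∃ σ : Equiv.Perm ι, ∀ i, ‖⟪e i, f (σ i)⟫_𝕜‖ = 1) ↔ ∀ i, ∃ j, ‖⟪e i, f j⟫_𝕜‖ = 1 := by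
  refine ⟨fun ⟨σ, hσ⟩ i => ⟨σ i, hσ i⟩, fun h => ?_⟩
  choose g hg using h
  have hinj : Function.Injective g := fun i i' hii' => by
    by_contra hne
    have := eq_zero_of_sum_sq_eq_one_of_eq_one (e.sum_sq_norm_inner_eq_one_right f (g i)) (hg i)
      (Ne.symm hne)
    rw [hii', hg i'] at this
    exact one_ne_zero this
  exact ⟨Equiv.ofBijective g hinj.bijective_of_finite, hg⟩

lemma overlapSum_eq_card_iff :
    e.overlapSum f = Fintype.card ι ↔ ∃ σ : Equiv.Perm ι, ∀ i, ‖⟪e i, f (σ i)⟫_𝕜‖ = 1 := by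
  calc e.overlapSum f = Fintype.card ι ↔ ∑ _i : ι, (1 : ℝ) = e.overlapSum f := by simp [eq_comm]
    _ ↔ ∀ i ∈ univ, 1 = ∑ j, ‖⟪e i, f j⟫_𝕜‖ :=
        sum_eq_sum_iff_of_le fun i _ => e.one_le_sum_norm_inner f i
    _ ↔ ∀ i, ∃ j, ‖⟪e i, f j⟫_𝕜‖ = 1 := by
        simp only [mem_univ, true_implies, eq_comm (a := (1 : ℝ)), fun i =>
          sum_eq_one_iff_exists_eq_one (e.sum_sq_norm_inner_eq_one_left f i) fun _ => norm_nonneg _]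
    _ ↔ ∃ σ : Equiv.Perm ι, ∀ i, ‖⟪e i, f (σ i)⟫_𝕜‖ = 1 :=
        (e.exists_perm_norm_inner_eq_one_iff f).symm

lemma overlapSum_comm : e.overlapSum f = f.overlapSum e := by
  rw [overlapSum, overlapSum, sum_comm]
  simp only [norm_inner_symm]

/-- The paper's `Q_{ab}`. When `ι` has at most one element the normalising factor is `1 / 0 = 0`. -/
noncomputable def unbiasedness : ℝ :=
  1 / (Fintype.card ι * (√(Fintype.card ι) - 1)) *
    ∑ i, ∑ j, (‖⟪e i, f j⟫_𝕜‖ - 1 / Fintype.card ι)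

lemma unbiasedness_eq :
    e.unbiasedness f =
      (e.overlapSum f - Fintype.card ι) / (Fintype.card ι * (√(Fintype.card ι) - 1)) := by
  have hsum : ∑ i, ∑ j, (‖⟪e i, f j⟫_𝕜‖ - 1 / Fintype.card ι) =
      e.overlapSum f - Fintype.card ι := by
    simp only [sum_sub_distrib, sum_const, card_univ, nsmul_eq_mul, overlapSum]
    rw [mul_one_div, ← mul_div_assoc, mul_self_div_self]
  rw [unbiasedness, hsum, one_div_mul_eq_div]

lemma unbiasedness_comm : e.unbiasedness f = f.unbiasedness e := by
  rw [unbiasedness_eq, unbiasedness_eq, overlapSum_comm]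

lemma unbiasedness_nonneg : 0 ≤ e.unbiasedness f := by
  rw [unbiasedness_eq]
  exact div_nonneg (sub_nonneg.mpr (e.card_le_overlapSum f)) (natCast_mul_sqrt_sub_one_nonneg _)

lemma unbiasedness_le_one : e.unbiasedness f ≤ 1 := by
  rw [unbiasedness_eq]
  refine div_le_one_of_le₀ ?_ (natCast_mul_sqrt_sub_one_nonneg _)
  linarith [e.overlapSum_le f]

variable {e f}

lemma unbiasedness_eq_one_iff (hι : 1 < Fintype.card ι) :
    e.unbiasedness f = 1 ↔ ∀ i j, ‖⟪e i, f j⟫_𝕜‖ ^ 2 = 1 / Fintype.card ι := by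
  rw [unbiasedness_eq, div_eq_one_iff_eq (natCast_mul_sqrt_sub_one_pos hι).ne',
    ← overlapSum_eq_card_mul_sqrt_iff]
  constructor <;> intro h <;> linarith

lemma unbiasedness_eq_zero_iff (hι : 1 < Fintype.card ι) :
    e.unbiasedness f = 0 ↔ ∃ σ : Equiv.Perm ι, ∀ i, ‖⟪e i, f (σ i)⟫_𝕜‖ = 1 := by
  rw [unbiasedness_eq, div_eq_zero_iff, or_iff_left (natCast_mul_sqrt_sub_one_pos hι).ne',
    sub_eq_zero, overlapSum_eq_card_iff]

end OrthonormalBasis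

open scoped ComplexInnerProductSpace in
theorem unbiasedness_measure_Qbar (n d : ℕ) (hn : 2 ≤ n) (hd : 2 ≤ d)
    (B : Fin n → OrthonormalBasis (Fin d) ℂ (EuclideanSpace ℂ (Fin d)))
    (Q : ℝ)
    (hQ : Q = (1 / (n.choose 2 : ℝ)) *
      ∑ p ∈ Finset.univ.filter (fun p : Fin n × Fin n => p.1 < p.2),
        (1 / (d * (Real.sqrt d - 1))) *
          ∑ i : Fin d, ∑ j : Fin d, (‖⟪B p.1 i, B p.2 j⟫‖ - 1 / d)) :
    (0 ≤ Q) ∧ (Q ≤ 1) ∧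
    (Q = 1 ↔ ∀ a b : Fin n, a ≠ b → ∀ i j : Fin d, ‖⟪B a i, B b j⟫‖ ^ 2 = 1 / d) ∧
    (Q = 0 ↔ ∀ a b : Fin n, a ≠ b →
      ∃ σ : Equiv.Perm (Fin d), ∀ i : Fin d, ‖⟪B a i, B b (σ i)⟫‖ = 1) := by
  set P := Finset.univ.filter (fun p : Fin n × Fin n => p.1 < p.2)
  have hP : P.Nonempty := by
    rw [← card_pos, Fintype.card_product_filter_lt, Fintype.card_fin]
    exact Nat.choose_pos hn
  have hQ_avg : Q = 𝔼 p ∈ P, (B p.1).unbiasedness (B p.2) := by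
    rw [hQ, expect_eq_sum_div_card, Fintype.card_product_filter_lt, Fintype.card_fin,
      one_div_mul_eq_div]
    simp only [OrthonormalBasis.unbiasedness, Fintype.card_fin]
  have hcard : 1 < Fintype.card (Fin d) := by rw [Fintype.card_fin]; omega
  have hsymm (c : ℝ) (a b : Fin n) :
      (B a).unbiasedness (B b) = c → (B b).unbiasedness (B a) = c :=
    fun h => (B a).unbiasedness_comm (B b) ▸ h
  refine ⟨hQ_avg ▸ expect_nonneg fun p _ => (B p.1).unbiasedness_nonneg (B p.2),
    hQ_avg ▸ expect_le hP fun p _ => (B p.1).unbiasedness_le_one (B p.2), ?_, ?_⟩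
  · rw [hQ_avg, expect_eq_iff_of_le hP fun p _ => (B p.1).unbiasedness_le_one (B p.2),
      forall_mem_filter_lt_iff_forall_ne (hsymm 1)]
    simp only [OrthonormalBasis.unbiasedness_eq_one_iff hcard, Fintype.card_fin]
  · rw [hQ_avg, expect_eq_zero_iff_of_nonneg fun p _ => (B p.1).unbiasedness_nonneg (B p.2),
      forall_mem_filter_lt_iff_forall_ne (hsymm 0)]
    simp only [OrthonormalBasis.unbiasedness_eq_zero_iff hcard]
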